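/- Let X be a smooth manifold, β a free homotopy class of loops in X which is not a power (i.e., for any basepoint x₀ on a representative, the corresponding based class β_{x₀} ∈ π₁(X, x₀) cannot be written as αⁿ with n > 1). Then the S¹-reparametrization action on the component L_β X of the free loop space, given by (t·o)(τ) = o(t+τ), is free. -/

import Mathlib

open Set

noncomputable section

/-- The circle `ℝ/ℤ`. -/
abbrev Circle1 : Type := AddCircle (1 : ℝ)

/-- Free loops in `X`: continuous maps `S¹ = ℝ/ℤ → X`. -/
abbrev FreeLoop (X : Type*) [TopologicalSpace X] : Type _ := C(Circle1, X)

/-- The setoid of free homotopy of loops. -/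
def freeHomotopySetoid (X : Type*) [TopologicalSpace X] : Setoid (FreeLoop X) :=
  ⟨ContinuousMap.Homotopic, ContinuousMap.Homotopic.equivalence⟩

/-- Free homotopy classes of loops in `X`; this is `π₁(X)` in the sense of the paper. -/
def FreeLoopClass (X : Type*) [TopologicalSpace X] : Type _ :=
  Quotient (freeHomotopySetoid X)

/-- The free homotopy class of a loop. -/
def loopClass {X : Type*} [TopologicalSpace X] (γ : FreeLoop X) : FreeLoopClass X :=
  Quotient.mk (freeHomotopySetoid X) γ

/-- An exhaustion of `X` by nested compact sets. -/
def IsCompactExhaustion {X : Type*} [TopologicalSpace X] (K : ℕ → Set X) : Prop :=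
  (∀ i, IsCompact (K i)) ∧ Monotone K ∧ (⋃ i, K i) = Set.univ

/-- `β` is boundary compressible with respect to the exhaustion `K`: for every `i`, `β` is in the
image of `π₁(X - K i) → π₁(X)`, i.e. `β` is represented by a loop avoiding `K i`. -/
def CompressibleWrt {X : Type*} [TopologicalSpace X] (K : ℕ → Set X)
    (β : FreeLoopClass X) : Prop :=
  ∀ i, ∃ γ : FreeLoop X, (∀ t, γ t ∉ K i) ∧ loopClass γ = β

/-- `β` is boundary incompressible: not boundary compressible (w.r.t. any compact exhaustion;
the notion is independent of the choice). -/
def BoundaryIncompressible {X : Type*} [TopologicalSpace X] (β : FreeLoopClass X) : Prop :=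
  ∀ K : ℕ → Set X, IsCompactExhaustion K → ¬ CompressibleWrt K β

/-- The `S¹`-reparametrization action: `(θ · γ)(τ) = γ(τ + θ)`. -/
def rotateLoop {X : Type*} [TopologicalSpace X] (θ : Circle1) (γ : FreeLoop X) : FreeLoop X :=
  γ.comp ⟨fun t => t + θ, by continuity⟩

/-- The based path `[0,1] → X` underlying a free loop. -/
def basedPath {X : Type*} [TopologicalSpace X] (γ : FreeLoop X) : Path (γ 0) (γ 0) where
  toFun t := γ (((t : ℝ) : Circle1))
  continuous_toFun := γ.continuous.comp ((AddCircle.continuous_mk' 1).comp continuous_subtype_val)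
  source' := by norm_cast
  target' := by
    show γ ((((1 : unitInterval) : ℝ)) : Circle1) = γ 0
    norm_num [show (((1 : ℝ)) : Circle1) = 0 from AddCircle.coe_period 1]

/-- The based homotopy class `β_{x₀} ∈ π₁(X, γ 0)` of a free loop `γ`. -/
def basedClass {X : Type*} [TopologicalSpace X] (γ : FreeLoop X) :
    FundamentalGroup X (γ 0) :=
  FundamentalGroup.fromPath ⟦basedPath γ⟧

/-- `β` is at most a `k`-power: whenever a based representative of `β` is written as `αⁿ` with
`n > 0`, then `n ≤ k`. -/
def IsAtMostKPower {X : Type*} [TopologicalSpace X] (β : FreeLoopClass X) (k : ℕ) : Prop :=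
  ∀ γ : FreeLoop X, loopClass γ = β →
    ∀ (α : FundamentalGroup X (γ 0)) (n : ℕ), 0 < n → basedClass γ = α ^ n → n ≤ k

/-- `β` is not a power: it is at most a `1`-power. -/
def NotAPower {X : Type*} [TopologicalSpace X] (β : FreeLoopClass X) : Prop :=
  IsAtMostKPower β 1

/-! If `θ ≠ 0` fixes `γ`, so do all multiples of `θ`. When `θ` has infinite order these are dense
in the circle, and since charts make `X` locally Hausdorff, `γ` is constant: its based class is
`1 = 1 ^ 2`. When `θ` has order `q ≥ 2` they contain `1 / q`, so `γ` traverses the same arc `q`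
times and its based class is a `q`-th power. -/

theorem AddCircle.period_div_mem_zmultiples {𝕜 : Type*} [Field 𝕜] [LinearOrder 𝕜]
    [IsStrictOrderedRing 𝕜] {p : 𝕜} [Fact (0 < p)] {θ : AddCircle p} {q : ℕ}
    (hq : 0 < q) (h : addOrderOf θ = q) :
    ((p / q : 𝕜) : AddCircle p) ∈ AddSubgroup.zmultiples θ := by
  have hgen : addOrderOf ((p / q : 𝕜) : AddCircle p) = q := addOrderOf_period_div hq
  -- `θ = m p / q` lies in the cyclic group generated by `p / q`, which has the same order `q`.
  obtain ⟨m, -, -, rfl⟩ := (addOrderOf_eq_pos_iff hq).mp h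
  have hle : AddSubgroup.zmultiples ((m / q * p : 𝕜) : AddCircle p)
      ≤ AddSubgroup.zmultiples ((p / q : 𝕜) : AddCircle p) :=
    AddSubgroup.zmultiples_le.mpr ⟨m, by simp only [← coe_zsmul]; congr 1; simp; ring⟩
  have : Finite (AddSubgroup.zmultiples ((p / q : 𝕜) : AddCircle p)) :=
    Nat.finite_of_card_ne_zero (by rw [Nat.card_zmultiples, hgen]; exact hq.ne')
  rw [AddSubgroup.eq_of_le_of_card_ge hle
    (by rw [Nat.card_zmultiples, Nat.card_zmultiples, h, hgen])]
  exact AddSubgroup.mem_zmultiples _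

theorem ChartedSpace.eq_const_of_eqOn_dense {H X Y : Type*} [TopologicalSpace H] [T2Space H]
    [TopologicalSpace X] [ChartedSpace H X] [TopologicalSpace Y] {f : Y → X} (hf : Continuous f)
    {s : Set Y} (hs : Dense s) {c : X} (hc : ∀ y ∈ s, f y = c) (y : Y) : f y = c := by
  set e := chartAt H (f y)
  have hU : IsOpen (f ⁻¹' e.source) := e.open_source.preimage hf
  have hyU : y ∈ f ⁻¹' e.source := mem_chart_source H (f y)
  obtain ⟨y₀, hy₀U, hy₀s⟩ := hs.inter_open_nonempty _ hU ⟨y, hyU⟩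
  have hcU : c ∈ e.source := hc y₀ hy₀s ▸ hy₀U
  have heq : EqOn (e ∘ f) (fun _ => e c) (f ⁻¹' e.source) :=
    EqOn.of_subset_closure (fun y' hy' => by simp [hc y' hy'.2])
      (e.continuousOn.comp hf.continuousOn fun _ h => h) continuousOn_const inter_subset_left
      (hs.open_subset_closure_inter hU)
  exact e.injOn hyU hcU (heq hyU)

section Paths

variable {X : Type*} [TopologicalSpace X]

theorem Path.homotopic_of_factors_through_real (L : C(ℝ, X)) {x y : X} {p p' : Path x y}
    {f g : unitInterval → ℝ} (hf : Continuous f) (hg : Continuous g)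
    (hp : ∀ t, p t = L (f t)) (hp' : ∀ t, p' t = L (g t)) (h0 : f 0 = g 0) (h1 : f 1 = g 1) :
    p.Homotopic p' := by
  refine ⟨{ toFun := fun st => L ((1 - (st.1 : ℝ)) * f st.2 + (st.1 : ℝ) * g st.2)
            map_zero_left := fun t => by simp [hp t]
            map_one_left := fun t => by simp [hp' t]
            prop' := ?_ }⟩
  rintro s t (rfl | rfl)
  · simp [← h0, ← add_mul, hp 0]
  · simp [← h1, ← add_mul, hp 1]

def periodicLoop (L : C(ℝ, X)) {c : ℝ} (hL : Function.Periodic L c) (n : ℕ) :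
    Path (L 0) (L 0) where
  toFun t := L (n * c * t)
  source' := by simp
  target' := by simpa using (hL.nat_mul n).eq

theorem periodicLoop_succ_homotopic (L : C(ℝ, X)) {c : ℝ} (hL : Function.Periodic L c) (n : ℕ) :
    (periodicLoop L hL (n + 1)).Homotopic ((periodicLoop L hL n).trans (periodicLoop L hL 1)) := by
  -- `g` runs through `[0, n c]`, then `[n c, (n + 1) c]`, where `L` repeats itself on `[0, c]`.
  refine Path.homotopic_of_factors_through_real L (f := fun t => (n + 1) * c * t)
    (g := fun t => if (t : ℝ) ≤ 1 / 2 then n * c * (2 * t) else (n + (2 * t - 1)) * c)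
    (by fun_prop) ?_ (fun t => by simp [periodicLoop]) (fun t => ?_) (by simp) (by norm_num)
  · exact Continuous.if_le (by fun_prop) (by fun_prop) (by fun_prop) continuous_const
      fun t ht => by rw [ht]; ring
  · rw [Path.trans_apply]
    split_ifs
    · rfl
    · simp only [periodicLoop, Path.coe_mk_mk, Nat.cast_one, one_mul]
      rw [add_mul, add_comm, hL.nat_mul n, mul_comm]

theorem fromPath_periodicLoop (L : C(ℝ, X)) {c : ℝ} (hL : Function.Periodic L c) (n : ℕ) :
    FundamentalGroup.fromPath (.mk (periodicLoop L hL n))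
      = FundamentalGroup.fromPath (.mk (periodicLoop L hL 1)) ^ n := by
  induction n with
  | zero =>
    rw [pow_zero, FundamentalGroup.one_def]
    congr 2
    ext t
    simp [periodicLoop]
  | succ n ih =>
    rw [pow_succ', ← ih, FundamentalGroup.mul_def,
      Path.Homotopic.Quotient.eq.mpr (periodicLoop_succ_homotopic L hL n)]
    rfl

end Paths

section Rotation

variable {X : Type*} [TopologicalSpace X]

def rotationStabilizer (γ : FreeLoop X) : AddSubgroup Circle1 where
  carrier := {θ | ∀ t, γ (t + θ) = γ t}
  zero_mem' := by simp
  add_mem' {a b} ha hb t := by rw [← add_assoc, hb, ha]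
  neg_mem' {a} ha t := by simpa using (ha (t + -a)).symm

theorem mem_rotationStabilizer {γ : FreeLoop X} {θ : Circle1} :
    θ ∈ rotationStabilizer γ ↔ rotateLoop θ γ = γ :=
  (ContinuousMap.ext_iff (f := rotateLoop θ γ) (g := γ)).symm

theorem basedClass_eq_one_of_dense_rotationStabilizer {H : Type*} [TopologicalSpace H]
    [T2Space H] [ChartedSpace H X] {γ : FreeLoop X}
    (hγ : Dense (rotationStabilizer γ : Set Circle1)) : basedClass γ = 1 := by
  have hconst : ∀ t, γ t = γ 0 :=
    ChartedSpace.eq_const_of_eqOn_dense (H := H) γ.continuous hγ fun θ hθ => by simpa using hθ 0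
  show FundamentalGroup.fromPath (.mk (basedPath γ)) = .refl (γ 0)
  congr 2
  ext t
  simp [basedPath, hconst]

theorem exists_basedClass_eq_pow_of_mem_rotationStabilizer {γ : FreeLoop X} {q : ℕ} (hq : 0 < q)
    (hγ : ((1 / q : ℝ) : Circle1) ∈ rotationStabilizer γ) : ∃ α, basedClass γ = α ^ q := by
  let L : C(ℝ, X) := γ.comp ⟨_, AddCircle.continuous_mk' 1⟩
  have hL : Function.Periodic L (1 / q) := fun s => hγ s
  have hpath : basedPath γ = periodicLoop L hL q := by
    ext t
    simp [basedPath, periodicLoop, L, hq.ne']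
  exact ⟨_, (congrArg (FundamentalGroup.fromPath ∘ .mk) hpath).trans
    (fromPath_periodicLoop L hL q)⟩

end Rotation

theorem reparametrization_action_free_of_not_power_general
    {E : Type*} [NormedAddCommGroup E]
    {X : Type*} [TopologicalSpace X] [ChartedSpace E X]
    (β : FreeLoopClass X) (hβ : NotAPower β) :
    ∀ γ : FreeLoop X, loopClass γ = β → ∀ θ : Circle1, rotateLoop θ γ = γ → θ = 0 := by
  intro γ hγ θ hθ
  have hθS : AddSubgroup.zmultiples θ ≤ rotationStabilizer γ :=
    AddSubgroup.zmultiples_le.mpr (mem_rotationStabilizer.mpr hθ)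
  rcases (addOrderOf θ).eq_zero_or_pos with hθ₀ | hq
  · have hdense : Dense (rotationStabilizer γ : Set Circle1) :=
      (AddCircle.denseRange_zsmul_iff.mpr hθ₀).mono <| by
        rintro _ ⟨n, rfl⟩; exact hθS (AddSubgroup.zsmul_mem_zmultiples θ n)
    have h1 : basedClass γ = 1 ^ 2 := by
      rw [one_pow, basedClass_eq_one_of_dense_rotationStabilizer (H := E) hdense]
    exact absurd (hβ γ hγ 1 2 two_pos h1) (by norm_num)
  · obtain ⟨α, hα⟩ := exists_basedClass_eq_pow_of_mem_rotationStabilizer hq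
      (hθS (AddCircle.period_div_mem_zmultiples hq rfl))
    exact AddMonoid.addOrderOf_eq_one_iff.mp (le_antisymm (hβ γ hγ α _ hq hα) hq)

/-- if the free homotopy class `β` is not a power, then the `S¹`-reparametrization
action on the component `L_β X` of the free loop space is free. -/
theorem reparametrization_action_free_of_not_power
    {E : Type*} [NormedAddCommGroup E] [NormedSpace ℝ E]
    {X : Type*} [TopologicalSpace X] [ChartedSpace E X]
    (β : FreeLoopClass X) (hβ : NotAPower β) :
    ∀ γ : FreeLoop X, loopClass γ = β → ∀ θ : Circle1, rotateLoop θ γ = γ → θ = 0 :=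
  reparametrization_action_free_of_not_power_general (E := E) β hβ
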